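/- arXiv:2204.09214 — 5 statements merged into one kernel-verified Lean document; each statement's English description precedes it below -/
import Mathlib

section
/- Let x₁ ≥ x₂ ≥ … ≥ x_m and y₁ ≥ y₂ ≥ … ≥ y_m be dual numbers, and let z₁, …, z_m be dual numbers such that for every k ≤ m−1 the sum of the k largest z's is at most y₁ + … + y_k, and z₁ + … + z_m = y₁ + … + y_m. Then Σᵢ xᵢzᵢ ≤ Σᵢ xᵢyᵢ. -/
open TrivSqZeroExt Finset

/-- Lexicographic order on dual numbers: `q ≤ p`. -/
def DualNumber.Le (q p : DualNumber ℝ) : Prop :=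
  q.fst < p.fst ∨ (q.fst = p.fst ∧ q.snd ≤ p.snd)

/-!
The lexicographic order makes `ℝ[ε]` an ordered ring, though not a strictly ordered one
(`ε * ε = 0`), so Mathlib's rearrangement inequality is not available, but Abel summation is:
for antitone `c`, `∑ cᵢ (bᵢ - aᵢ)` is a nonnegative combination of the partial sums of
`b - a` plus `c_min` times its total, hence nonnegative when those partial sums are nonnegative
and the total vanishes. Since a sum of `k` terms of an antitone family is at most the sum of its
first `k` terms, this applies to `x ∘ σ` against `x`, which replaces `z` by its decreasing
rearrangement `zh`; applied to `zh` against `y`, it is the majorization hypothesis.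
-/

section Abel

variable {ι R : Type*} [LinearOrder ι] [Ring R] [PartialOrder R] [IsOrderedRing R]

-- The lower bound `t` makes Abel summation inductive: removing the largest index `a` of `s`
-- lowers it to `c a`.
theorem Finset.mul_sum_le_sum_mul_of_partial_sums_nonneg {s : Finset ι} {c d : ι → R} {t : R}
    (hc : AntitoneOn c s) (ht : ∀ i ∈ s, t ≤ c i)
    (hd : ∀ i ∈ s, 0 ≤ ∑ j ∈ s with j < i, d j) (hs : 0 ≤ ∑ i ∈ s, d i) :
    t * ∑ i ∈ s, d i ≤ ∑ i ∈ s, c i * d i := by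
  induction s using Finset.induction_on_max generalizing t with
  | empty => simp
  | insert a s hlt ih =>
    have ha : a ∉ s := fun h => (hlt a h).false
    have hfilter : ∀ i ∈ s, {j ∈ insert a s | j < i} = {j ∈ s | j < i} := fun i hi => by
      rw [filter_insert, if_neg (hlt i hi).not_gt]
    have hsum_s : 0 ≤ ∑ i ∈ s, d i := by
      have := hd a (mem_insert_self a s)
      rwa [filter_insert, if_neg (lt_irrefl a), filter_true_of_mem hlt] at this
    have ih' : c a * ∑ i ∈ s, d i ≤ ∑ i ∈ s, c i * d i :=
      ih (hc.mono (subset_insert a s))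
        (fun i hi => hc (mem_insert_of_mem hi) (mem_insert_self a s) (hlt i hi).le)
        (fun i hi => hfilter i hi ▸ hd i (mem_insert_of_mem hi)) hsum_s
    simp only [sum_insert ha] at hs ⊢
    calc t * (d a + ∑ i ∈ s, d i) ≤ c a * (d a + ∑ i ∈ s, d i) :=
          mul_le_mul_of_nonneg_right (ht a (mem_insert_self a s)) hs
      _ = c a * d a + c a * ∑ i ∈ s, d i := mul_add _ _ _
      _ ≤ c a * d a + ∑ i ∈ s, c i * d i := add_le_add_right ih' _

theorem Finset.sum_mul_le_sum_mul_of_partial_sums_le [Fintype ι] {a b c : ι → R}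
    (hc : Antitone c) (hab : ∀ i, ∑ j with j < i, a j ≤ ∑ j with j < i, b j)
    (hsum : ∑ i, a i = ∑ i, b i) :
    ∑ i, c i * a i ≤ ∑ i, c i * b i := by
  rcases isEmpty_or_nonempty ι with _ | _
  · simp
  have key := Finset.mul_sum_le_sum_mul_of_partial_sums_nonneg (s := univ) (d := b - a)
    (t := c (univ.max' univ_nonempty)) (by simpa using hc)
    (fun i _ => hc (le_max' _ i (mem_univ i)))
    (fun i _ => by simpa [sum_sub_distrib] using hab i)
    (by simp [sum_sub_distrib, hsum])
  simpa [sum_sub_distrib, mul_sub, hsum] using key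

end Abel

section Rearrangement

variable {M : Type*} [AddCommMonoid M] [PartialOrder M] [IsOrderedAddMonoid M] {m : ℕ}
  {f : Fin m → M}

theorem Fin.sum_le_sum_val_lt_card (hf : Antitone f) (T : Finset (Fin m)) :
    ∑ i ∈ T, f i ≤ ∑ i ∈ univ.filter (fun i : Fin m => (i : ℕ) < #T), f i := by
  induction T using Finset.induction_on_max with
  | empty => simp
  | insert a T hlt ih =>
    have ha : a ∉ T := fun h => (hlt a h).false
    have hcard : #T ≤ a := by
      simpa using card_le_card (s := T) (t := Iio a) fun i hi => mem_Iio.2 (hlt i hi)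
    have hfilter : univ.filter (fun i : Fin m => (i : ℕ) < #T + 1) =
        insert ⟨#T, by omega⟩ (univ.filter fun i : Fin m => (i : ℕ) < #T) := by
      ext i
      simp [Fin.ext_iff]
      omega
    rw [sum_insert ha, card_insert_of_notMem ha, hfilter, sum_insert (by simp)]
    exact add_le_add (hf (Fin.mk_le_of_le_val hcard)) ih

theorem Fin.sum_filter_lt_comp_perm_le (hf : Antitone f) (σ : Equiv.Perm (Fin m)) (i : Fin m) :
    ∑ j with j < i, f (σ j) ≤ ∑ j with j < i, f j := by
  refine (sum_map _ σ.toEmbedding f).symm.trans_le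
    ((Fin.sum_le_sum_val_lt_card hf _).trans_eq ?_)
  rw [card_map, filter_gt_eq_Iio, Fin.card_Iio]
  congr 1
  ext j
  simp

end Rearrangement

namespace DualNumber

noncomputable instance : LinearOrder (DualNumber ℝ) :=
  inferInstanceAs (LinearOrder (Lex (ℝ × ℝ)))

theorem le_iff_Le (q p : DualNumber ℝ) : q ≤ p ↔ DualNumber.Le q p :=
  Prod.Lex.le_iff

instance : IsOrderedAddMonoid (DualNumber ℝ) where
  add_le_add_left q p h r := by
    simp only [le_iff_Le, DualNumber.Le, fst_add, snd_add] at h ⊢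
    rcases h with h | ⟨h1, h2⟩
    · exact .inl (by linarith)
    · exact .inr ⟨by rw [h1], by linarith⟩

instance : ZeroLEOneClass (DualNumber ℝ) where
  zero_le_one := (le_iff_Le _ _).2 (.inl (by simp))

protected theorem mul_nonneg {q p : DualNumber ℝ} (hq : 0 ≤ q) (hp : 0 ≤ p) :
    0 ≤ q * p := by
  simp only [le_iff_Le, DualNumber.Le, fst_zero, snd_zero, fst_mul, snd_mul] at hq hp ⊢
  rcases hq with hq | ⟨hq₁, hq₂⟩ <;> rcases hp with hp | ⟨hp₁, hp₂⟩
  · exact .inl (mul_pos hq hp)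
  · refine .inr ⟨by rw [← hp₁, mul_zero], ?_⟩
    rw [← hp₁, mul_zero, add_zero]
    exact mul_nonneg hq.le hp₂
  · refine .inr ⟨by rw [← hq₁, zero_mul], ?_⟩
    rw [← hq₁, zero_mul, zero_add]
    exact mul_nonneg hq₂ hp.le
  · refine .inr ⟨by rw [← hq₁, zero_mul], ?_⟩
    rw [← hq₁, ← hp₁, zero_mul, mul_zero, add_zero]

instance : IsOrderedRing (DualNumber ℝ) :=
  IsOrderedRing.of_mul_nonneg fun _ _ => DualNumber.mul_nonneg

end DualNumber

theorem dual_majorization_trace_lemma_general (m : ℕ) (x y z zh : Fin m → DualNumber ℝ)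
    (σ : Equiv.Perm (Fin m)) (hzh : ∀ i, zh i = z (σ i))
    (hx : ∀ i j : Fin m, i ≤ j → DualNumber.Le (x j) (x i))
    (hz : ∀ i j : Fin m, i ≤ j → DualNumber.Le (zh j) (zh i))
    (hmaj : ∀ k : ℕ, k ≤ m - 1 →
      DualNumber.Le (∑ i ∈ univ.filter (fun i : Fin m => (i : ℕ) < k), zh i)
        (∑ i ∈ univ.filter (fun i : Fin m => (i : ℕ) < k), y i))
    (hsum : ∑ i, z i = ∑ i, y i) :
    DualNumber.Le (∑ i, x i * z i) (∑ i, x i * y i) := by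
  simp only [← DualNumber.le_iff_Le] at hx hz hmaj ⊢
  have hzh_sum : ∑ i, zh i = ∑ i, y i := by
    rw [← hsum, ← Equiv.sum_comp σ z]
    exact sum_congr rfl fun i _ => hzh i
  calc ∑ i, x i * z i = ∑ i, zh i * x (σ i) := by
        rw [← Equiv.sum_comp σ]
        simp only [hzh, mul_comm]
    _ ≤ ∑ i, zh i * x i := sum_mul_le_sum_mul_of_partial_sums_le hz
        (Fin.sum_filter_lt_comp_perm_le hx σ) (Equiv.sum_comp σ x)
    _ = ∑ i, x i * zh i := by simp only [mul_comm]
    _ ≤ ∑ i, x i * y i :=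
        sum_mul_le_sum_mul_of_partial_sums_le hx (fun i => hmaj i (by omega)) hzh_sum

/-- Abel-summation majorization lemma over the dual numbers.  Here `zh` is the
decreasing rearrangement of `z` (via the permutation `σ`). -/
theorem dual_majorization_trace_lemma (m : ℕ) (x y z zh : Fin m → DualNumber ℝ)
    (σ : Equiv.Perm (Fin m)) (hzh : ∀ i, zh i = z (σ i))
    (hx : ∀ i j : Fin m, i ≤ j → DualNumber.Le (x j) (x i))
    (hy : ∀ i j : Fin m, i ≤ j → DualNumber.Le (y j) (y i))
    (hz : ∀ i j : Fin m, i ≤ j → DualNumber.Le (zh j) (zh i))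
    (hmaj : ∀ k : ℕ, k ≤ m - 1 →
      DualNumber.Le (∑ i ∈ univ.filter (fun i : Fin m => (i : ℕ) < k), zh i)
        (∑ i ∈ univ.filter (fun i : Fin m => (i : ℕ) < k), y i))
    (hsum : ∑ i, z i = ∑ i, y i) :
    DualNumber.Le (∑ i, x i * z i) (∑ i, x i * y i) :=
  dual_majorization_trace_lemma_general m x y z zh σ hzh hx hz hmaj hsum
end

section
/- For a quaternion Hermitian matrix A ∈ ℍ^{m×m} with unitary diagonalization A = U diag(λ₁,…,λ_m) U* and λ₁ ≥ … ≥ λ_m real, and for any k orthonormal vectors x⁽¹⁾,…,x⁽ᵏ⁾ ∈ ℍ^m (with respect to the quaternionic inner product ⟨u,v⟩ = Σ conj(vᵢ)uᵢ), one has Σⱼ (x⁽ʲ⁾)* A x⁽ʲ⁾ ≤ λ₁ + … + λ_k, with equality achieved by the first k columns of U. -/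
/-!
Substituting `y = Uᴴ x` keeps the vectors orthonormal and turns the quadratic form into
`∑ᵢ λᵢ |yᵢ|²`, so the left-hand side is `∑ᵢ λᵢ cᵢ` with `cᵢ = ∑ⱼ |y⁽ʲ⁾ᵢ|²`. The weights `cᵢ`
are the diagonal entries of the orthogonal projection `Y Yᴴ`, hence lie in `[0, 1]`, and they
sum to `k`; against decreasing `λᵢ` such weights do best when they put mass one on the first `k`
indices. The columns of `U` are eigenvectors, which gives equality.
-/

open Finset Quaternion Matrix

theorem Quaternion.re_sum {ι : Type*} (s : Finset ι) (f : ι → ℍ[ℝ]) :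
    (∑ i ∈ s, f i).re = ∑ i ∈ s, (f i).re :=
  map_sum (QuaternionAlgebra.reₗ (R := ℝ) (-1) 0 (-1)) f s

theorem Quaternion.sq_re_le_normSq (a : ℍ[ℝ]) : a.re ^ 2 ≤ normSq a := by
  rw [normSq_def']
  nlinarith [sq_nonneg a.imI, sq_nonneg a.imJ, sq_nonneg a.imK]

theorem Fin.sum_filter_val_lt_eq_sum_castLE {M : Type*} [AddCommMonoid M] {m k : ℕ}
    (hk : k ≤ m) (f : Fin m → M) :
    ∑ i ∈ univ.filter (fun i : Fin m => (i : ℕ) < k), f i = ∑ j : Fin k, f (Fin.castLE hk j) := by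
  refine Eq.symm ((sum_map univ (Fin.castLEEmb hk) f).symm.trans ?_)
  congr 1
  ext i
  simp only [mem_map, mem_univ, true_and, mem_filter, Fin.coe_castLEEmb]
  exact ⟨fun ⟨j, hj⟩ => hj ▸ j.2, fun hi => ⟨⟨i, hi⟩, rfl⟩⟩

theorem sum_mul_le_sum_filter_val_lt_of_antitone {m k : ℕ} (hk : k ≤ m) {lam c : Fin m → ℝ}
    (hlam : Antitone lam) (hc0 : ∀ i, 0 ≤ c i) (hc1 : ∀ i, c i ≤ 1) (hck : ∑ i, c i = k) :
    ∑ i, lam i * c i ≤ ∑ i ∈ univ.filter (fun i : Fin m => (i : ℕ) < k), lam i := by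
  cases m with
  | zero => simp
  | succ m =>
    -- For `k = 0` the truncated subtraction makes the pivot `lam 0`, which still works.
    set t := lam ⟨k - 1, by omega⟩
    have hterm : ∀ i, lam i * c i ≤ t * c i + if (i : ℕ) < k then lam i - t else 0 := by
      intro i
      split_ifs with hi
      · have : t ≤ lam i := hlam (Fin.le_iff_val_le_val.2 (show (i : ℕ) ≤ k - 1 by omega))
        nlinarith [hc1 i]
      · have : lam i ≤ t := hlam (Fin.le_iff_val_le_val.2 (show k - 1 ≤ (i : ℕ) by omega))
        nlinarith [hc0 i]
    calc ∑ i, lam i * c i ≤ ∑ i, (t * c i + if (i : ℕ) < k then lam i - t else 0) :=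
          sum_le_sum fun i _ => hterm i
      _ = ∑ i ∈ univ.filter (fun i : Fin (m + 1) => (i : ℕ) < k), lam i := by
          rw [sum_add_distrib, ← mul_sum, hck, ← sum_filter, sum_sub_distrib, sum_const,
            Fin.card_filter_val_lt, min_eq_right hk, nsmul_eq_mul]
          ring

namespace Matrix

variable {m n : Type*}

theorem dotProduct_star_col_mulVec_col [Fintype n] {α : Type*} [NonUnitalSemiring α] [StarRing α]
    (M : Matrix n m α) (A : Matrix n n α) (i j : m) :
    star (Mᵀ i) ⬝ᵥ A *ᵥ Mᵀ j = (Mᴴ * A * M) i j := by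
  rw [Matrix.mul_assoc, mul_apply, dotProduct]
  simp [mulVec, mul_apply, dotProduct]

theorem re_mul_conjTranspose_self_apply_self [Fintype n] (M : Matrix m n ℍ[ℝ]) (i : m) :
    ((M * Mᴴ) i i).re = ∑ j, normSq (M i j) := by
  simp [mul_apply, re_sum, self_mul_star]

theorem re_conjTranspose_mul_diagonal_mul_self_apply_self [Fintype m] [DecidableEq m]
    (M : Matrix m n ℍ[ℝ]) (d : m → ℝ) (j : n) :
    ((Mᴴ * diagonal (fun i => (d i : ℍ[ℝ])) * M) j j).re = ∑ i, d i * normSq (M i j) := by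
  rw [mul_apply]
  simp only [mul_diagonal, conjTranspose_apply, re_sum]
  refine sum_congr rfl fun i _ => ?_
  rw [mul_assoc, coe_commutes, ← mul_assoc, star_mul_self, ← Quaternion.coe_mul, re_coe,
    mul_comm]

theorem sum_normSq_le_one_of_conjTranspose_mul_self_eq_one [Fintype m] [Fintype n]
    [DecidableEq n] {M : Matrix m n ℍ[ℝ]} (hM : Mᴴ * M = 1) (i : m) :
    ∑ j, normSq (M i j) ≤ 1 := by
  -- `P = M Mᴴ` is a Hermitian idempotent, so `c = P i i = ∑ₗ |P i l|² ≥ |P i i|² = c²`.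
  set P := M * Mᴴ
  have hP : P * Pᴴ = P := by
    rw [(isHermitian_mul_conjTranspose_self M).eq, Matrix.mul_assoc, ← Matrix.mul_assoc Mᴴ, hM,
      Matrix.one_mul]
  set c := ∑ j, normSq (M i j)
  have hc : (P i i).re = c := re_mul_conjTranspose_self_apply_self M i
  have hc_sq : c ^ 2 ≤ c :=
    calc c ^ 2 ≤ normSq (P i i) := hc ▸ sq_re_le_normSq (P i i)
      _ ≤ ∑ l, normSq (P i l) := single_le_sum (fun l _ => normSq_nonneg) (mem_univ i)
      _ = c := by rw [← re_mul_conjTranspose_self_apply_self P, hP, hc]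
  nlinarith [show 0 ≤ c from sum_nonneg fun j _ => normSq_nonneg]

theorem sum_re_conjTranspose_mul_diagonal_mul_self_le {m k : ℕ} (hk : k ≤ m)
    {lam : Fin m → ℝ} (hlam : Antitone lam) {Y : Matrix (Fin m) (Fin k) ℍ[ℝ]} (hY : Yᴴ * Y = 1) :
    ∑ j, ((Yᴴ * diagonal (fun i => (lam i : ℍ[ℝ])) * Y) j j).re ≤
      ∑ i ∈ univ.filter (fun i : Fin m => (i : ℕ) < k), lam i := by
  have hcol : ∀ j, ∑ i, normSq (Y i j) = 1 := fun j => by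
    simpa [hY, normSq_star] using (re_mul_conjTranspose_self_apply_self Yᴴ j).symm
  simp_rw [re_conjTranspose_mul_diagonal_mul_self_apply_self]
  rw [sum_comm]
  simp_rw [← mul_sum]
  refine sum_mul_le_sum_filter_val_lt_of_antitone hk hlam
    (fun i => sum_nonneg fun j _ => normSq_nonneg)
    (sum_normSq_le_one_of_conjTranspose_mul_self_eq_one hY) ?_
  rw [sum_comm]
  simp [hcol]

end Matrix

/-- Ky Fan-type maximum principle for Hermitian quaternion matrices:
for any `k` orthonormal vectors `x⁽ʲ⁾`, `∑ⱼ (x⁽ʲ⁾)* A x⁽ʲ⁾ ≤ λ₁ + ⋯ + λ_k`,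
with equality attained at the first `k` columns of the diagonalizing unitary `U`. -/
theorem quaternion_kyfan_principle (m k : ℕ) (hk : k ≤ m)
    (A U : Matrix (Fin m) (Fin m) ℍ[ℝ]) (lam : Fin m → ℝ)
    (hU : Uᴴ * U = 1 ∧ U * Uᴴ = 1)
    (hlam : ∀ i j : Fin m, i ≤ j → lam j ≤ lam i)
    (hdiag : A = U * Matrix.diagonal (fun i => (lam i : ℍ[ℝ])) * Uᴴ)
    (x : Fin k → Fin m → ℍ[ℝ])
    (hortho : ∀ i j : Fin k, star (x j) ⬝ᵥ x i = if i = j then 1 else 0) :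
    (∑ j : Fin k, (star (x j) ⬝ᵥ A.mulVec (x j)).re ≤
      ∑ i ∈ univ.filter (fun i : Fin m => (i : ℕ) < k), lam i) ∧
    (∑ j : Fin k,
        (star (fun l => U l (Fin.castLE hk j)) ⬝ᵥ A.mulVec (fun l => U l (Fin.castLE hk j))).re =
      ∑ i ∈ univ.filter (fun i : Fin m => (i : ℕ) < k), lam i) := by
  set X : Matrix (Fin m) (Fin k) ℍ[ℝ] := (of x)ᵀ
  have hX : Xᴴ * X = 1 := by
    refine Matrix.ext fun i j => ?_
    simpa [X, mul_apply, dotProduct, one_apply, eq_comm] using hortho j i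
  set Y := Uᴴ * X
  have hY : Yᴴ * Y = 1 := by
    rw [conjTranspose_mul, conjTranspose_conjTranspose, Matrix.mul_assoc, ← Matrix.mul_assoc U,
      hU.2, Matrix.one_mul, hX]
  have hquad : ∀ j,
      star (x j) ⬝ᵥ A *ᵥ x j = (Yᴴ * diagonal (fun i => (lam i : ℍ[ℝ])) * Y) j j := fun j => by
    change star (Xᵀ j) ⬝ᵥ A *ᵥ Xᵀ j = _
    rw [dotProduct_star_col_mulVec_col, hdiag, conjTranspose_mul, conjTranspose_conjTranspose]
    simp only [Y, Matrix.mul_assoc]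
  have hUAU : Uᴴ * A * U = diagonal fun i => (lam i : ℍ[ℝ]) := by
    rw [hdiag, Matrix.mul_assoc, Matrix.mul_assoc, hU.1, Matrix.mul_one, ← Matrix.mul_assoc,
      hU.1, Matrix.one_mul]
  have hcol : ∀ i, (star (fun l => U l i) ⬝ᵥ A *ᵥ fun l => U l i).re = lam i := fun i => by
    rw [show (fun l => U l i) = Uᵀ i from rfl, dotProduct_star_col_mulVec_col, hUAU,
      diagonal_apply_eq, re_coe]
  refine ⟨?_, ?_⟩
  · simp_rw [hquad]
    exact sum_re_conjTranspose_mul_diagonal_mul_self_le hk hlam hY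
  · simp_rw [hcol]
    exact (Fin.sum_filter_val_lt_eq_sum_castLE hk lam).symm
end

section
/- Let A ∈ ℍ^{m×m} be a quaternion matrix with singular values σ₁(A) ≥ … ≥ σ_m(A), and let H = (A* + A)/2 with eigenvalues λ₁(H) ≥ … ≥ λ_m(H). Then λᵢ(H) ≤ σᵢ(A) for all i = 1, …, m. -/
/-!
Row vectors act on the left, and `x ↦ Re (x A x*)` is the quadratic form of `H`, since
`x Aᴴ x* = (x A x*)*`. Writing `x = a Wᴴ = b Uᴴ` gives `x H x* = ∑ μₖ |aₖ|²`,
`|x A|² = ∑ σₖ² |bₖ|²` and `|x|² = |a|² = |b|²`. As `(i + 1) + (m - i) > m`, some `x ≠ 0` has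
`a` supported on `k ≤ i` and `b` on `k ≥ i`; for it Cauchy–Schwarz gives
`μᵢ |x|² ≤ x H x* = Re (x A x*) ≤ |x A| |x| ≤ σᵢ |x|²`.
-/

open Quaternion Matrix Submodule

section DimensionCount

variable {K : Type*} [DivisionRing K]

theorem LinearIndependent.finrank_span_image_finset {V ι : Type*} [AddCommGroup V] [Module K V]
    {v : ι → V} (hv : LinearIndependent K v) (s : Finset ι) :
    Module.finrank K (span K (v '' s)) = s.card := by
  rw [Set.image_eq_range, ← Fintype.card_coe]
  exact finrank_span_eq_card (hv.comp _ Subtype.val_injective)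

theorem exists_ne_zero_mem_span_image_inf {V ι : Type*} [AddCommGroup V] [Module K V]
    [FiniteDimensional K V] {v w : ι → V} (hv : LinearIndependent K v)
    (hw : LinearIndependent K w) {s t : Finset ι}
    (hst : Module.finrank K V < s.card + t.card) :
    ∃ x ≠ 0, x ∈ span K (v '' s) ∧ x ∈ span K (w '' t) := by
  have hmeet : ¬ Disjoint (span K (v '' s)) (span K (w '' t)) := fun h => by
    have := finrank_add_finrank_le_of_disjoint h
    rw [hv.finrank_span_image_finset, hw.finrank_span_image_finset] at this
    omega
  simp only [disjoint_def, not_forall] at hmeet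
  obtain ⟨x, hxv, hxw, hx0⟩ := hmeet
  exact ⟨x, hx0, hxv, hxw⟩

variable {ι : Type*} [Fintype ι] [DecidableEq ι]

theorem vecMul_apply_eq_zero_of_mem_span_row_image {R : Type*} [Semiring R]
    {P P' : Matrix ι ι R} (h : P * P' = 1) {s : Set ι} {x : ι → R}
    (hx : x ∈ span R (P.row '' s)) {k : ι} (hk : k ∉ s) : (x ᵥ* P') k = 0 := by
  suffices span R (P.row '' s) ≤ LinearMap.ker ((LinearMap.proj k).comp P'.vecMulLinear) from
    this hx
  rw [span_le]
  rintro _ ⟨j, hj, rfl⟩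
  change (P * P') j k = 0
  rw [h, one_apply_ne (ne_of_mem_of_not_mem hj hk)]

theorem exists_ne_zero_vecMul_eq_vecMul {P P' Q Q' : Matrix ι ι K} (hP : P * P' = 1)
    (hP' : P' * P = 1) (hQ : Q * Q' = 1) (hQ' : Q' * Q = 1) {s t : Finset ι}
    (hst : Fintype.card ι < s.card + t.card) :
    ∃ a b : ι → K, a ≠ 0 ∧ (∀ k, a k ≠ 0 → k ∈ s) ∧ (∀ k, b k ≠ 0 → k ∈ t) ∧
      a ᵥ* P = b ᵥ* Q := by
  have hPi : LinearIndependent K P.row := linearIndependent_rows_of_isUnit ⟨⟨P, P', hP, hP'⟩, rfl⟩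
  have hQi : LinearIndependent K Q.row := linearIndependent_rows_of_isUnit ⟨⟨Q, Q', hQ, hQ'⟩, rfl⟩
  have hdim : Module.finrank K (ι → K) < s.card + t.card := by
    rwa [Module.finrank_fintype_fun_eq_card]
  obtain ⟨x, hx0, hxP, hxQ⟩ := exists_ne_zero_mem_span_image_inf hPi hQi hdim
  have hxP' : x ᵥ* P' ᵥ* P = x := by rw [vecMul_vecMul, hP', vecMul_one]
  have hxQ' : x ᵥ* Q' ᵥ* Q = x := by rw [vecMul_vecMul, hQ', vecMul_one]
  refine ⟨x ᵥ* P', x ᵥ* Q', fun h => hx0 ?_, fun k => not_imp_comm.mp ?_,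
    fun k => not_imp_comm.mp ?_, hxP'.trans hxQ'.symm⟩
  · rw [← hxP', h, zero_vecMul]
  · exact vecMul_apply_eq_zero_of_mem_span_row_image hP hxP
  · exact vecMul_apply_eq_zero_of_mem_span_row_image hQ hxQ

end DimensionCount

namespace Matrix

variable {R ι : Type*} [Fintype ι] [Semiring R] [StarRing R]

theorem vecMul_vecMul_dotProduct_star (a : ι → R) (N B : Matrix ι ι R) :
    (a ᵥ* N) ᵥ* B ⬝ᵥ star (a ᵥ* N) = a ᵥ* (N * B * Nᴴ) ⬝ᵥ star a := by
  rw [star_vecMul, dotProduct_mulVec, vecMul_vecMul, vecMul_vecMul, Matrix.mul_assoc]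

theorem vecMul_conjTranspose_dotProduct_star [DecidableEq ι] (a : ι → R) {N : Matrix ι ι R}
    (hN : Nᴴ * N = 1) : a ᵥ* Nᴴ ⬝ᵥ star (a ᵥ* Nᴴ) = a ⬝ᵥ star a := by
  simpa [hN] using vecMul_vecMul_dotProduct_star a Nᴴ 1

end Matrix

namespace Quaternion

variable {ι : Type*}

theorem coe_sum (s : Finset ι) (f : ι → ℝ) :
    ((∑ k ∈ s, f k : ℝ) : ℍ[ℝ]) = ∑ k ∈ s, (f k : ℍ[ℝ]) := by
  simpa only [algebraMap_def] using map_sum (algebraMap ℝ ℍ[ℝ]) f s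

theorem re_sum_s14 (s : Finset ι) (f : ι → ℍ[ℝ]) : (∑ k ∈ s, f k).re = ∑ k ∈ s, (f k).re :=
  map_sum (QuaternionAlgebra.reₗ (R := ℝ) (-1) 0 (-1)) f s

variable [Fintype ι]

theorem dotProduct_star_self_eq (x : ι → ℍ[ℝ]) :
    x ⬝ᵥ star x = ((∑ k, normSq (x k) : ℝ) : ℍ[ℝ]) := by
  simp only [dotProduct, Pi.star_apply, self_mul_star, coe_sum]

theorem vecMul_diagonal_dotProduct_star [DecidableEq ι] (a : ι → ℍ[ℝ]) (d : ι → ℝ) :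
    a ᵥ* diagonal (fun k => (d k : ℍ[ℝ])) ⬝ᵥ star a
      = ((∑ k, d k * normSq (a k) : ℝ) : ℍ[ℝ]) := by
  simp only [dotProduct, vecMul_diagonal, Pi.star_apply, coe_sum]
  refine Finset.sum_congr rfl fun k _ => ?_
  rw [mul_coe_eq_smul, smul_mul_assoc, self_mul_star, smul_coe]

theorem sum_normSq_pos {x : ι → ℍ[ℝ]} (hx : x ≠ 0) : 0 < ∑ k, normSq (x k) := by
  obtain ⟨j, hj⟩ := Function.ne_iff.mp hx
  exact Finset.sum_pos' (fun k _ => normSq_nonneg)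
    ⟨j, Finset.mem_univ j, normSq_nonneg.lt_of_ne' (normSq_ne_zero.mpr hj)⟩

theorem mul_sum_normSq_le_sum_mul_normSq {a : ι → ℍ[ℝ]} {c : ι → ℝ} {r : ℝ}
    (h : ∀ k, a k ≠ 0 → r ≤ c k) : r * ∑ k, normSq (a k) ≤ ∑ k, c k * normSq (a k) := by
  rw [Finset.mul_sum]
  refine Finset.sum_le_sum fun k _ => ?_
  rcases eq_or_ne (a k) 0 with hk | hk
  · simp [hk]
  · exact mul_le_mul_of_nonneg_right (h k hk) normSq_nonneg

theorem sum_mul_normSq_le_mul_sum_normSq {a : ι → ℍ[ℝ]} {c : ι → ℝ} {r : ℝ}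
    (h : ∀ k, a k ≠ 0 → c k ≤ r) : ∑ k, c k * normSq (a k) ≤ r * ∑ k, normSq (a k) := by
  rw [Finset.mul_sum]
  refine Finset.sum_le_sum fun k _ => ?_
  rcases eq_or_ne (a k) 0 with hk | hk
  · simp [hk]
  · exact mul_le_mul_of_nonneg_right (h k hk) normSq_nonneg

theorem sum_normSq_vecMul_conjTranspose [DecidableEq ι] (a : ι → ℍ[ℝ])
    {N : Matrix ι ι ℍ[ℝ]} (hN : Nᴴ * N = 1) :
    ∑ k, normSq ((a ᵥ* Nᴴ) k) = ∑ k, normSq (a k) := by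
  apply coe_injective
  rw [← dotProduct_star_self_eq, ← dotProduct_star_self_eq,
    vecMul_conjTranspose_dotProduct_star a hN]

theorem re_dotProduct_star_le (y x : ι → ℍ[ℝ]) :
    (y ⬝ᵥ star x).re ≤ √(∑ k, normSq (y k)) * √(∑ k, normSq (x k)) := by
  have hnorm : ∀ q : ℍ[ℝ], ‖q‖ = √(normSq q) := fun q => by
    rw [normSq_eq_norm_mul_self, Real.sqrt_mul_self (norm_nonneg q)]
  calc (y ⬝ᵥ star x).re = ∑ k, inner ℝ (y k) (x k) := by
        simp only [dotProduct, Pi.star_apply, re_sum_s14, inner_def]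
    _ ≤ ∑ k, √(normSq (y k)) * √(normSq (x k)) :=
        Finset.sum_le_sum fun k _ => by simpa only [hnorm] using real_inner_le_norm (y k) (x k)
    _ ≤ _ := Real.sum_sqrt_mul_sqrt_le _ (fun _ => normSq_nonneg) (fun _ => normSq_nonneg)

theorem re_dotProduct_star_le_of_sum_normSq_le {y x : ι → ℍ[ℝ]} {s : ℝ} (hs : 0 ≤ s)
    (h : ∑ k, normSq (y k) ≤ s ^ 2 * ∑ k, normSq (x k)) :
    (y ⬝ᵥ star x).re ≤ s * ∑ k, normSq (x k) := by
  have hx : 0 ≤ ∑ k, normSq (x k) := Finset.sum_nonneg fun _ _ => normSq_nonneg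
  calc (y ⬝ᵥ star x).re ≤ √(∑ k, normSq (y k)) * √(∑ k, normSq (x k)) :=
        re_dotProduct_star_le y x
    _ ≤ √(s ^ 2 * ∑ k, normSq (x k)) * √(∑ k, normSq (x k)) := by gcongr
    _ = s * ∑ k, normSq (x k) := by
        rw [Real.sqrt_mul' _ hx, Real.sqrt_sq hs, mul_assoc, Real.mul_self_sqrt hx]

theorem vecMul_hermitianPart_dotProduct_star (x : ι → ℍ[ℝ]) (A : Matrix ι ι ℍ[ℝ]) :
    x ᵥ* ((2⁻¹ : ℝ) • (Aᴴ + A)) ⬝ᵥ star x = ((x ᵥ* A ⬝ᵥ star x).re : ℍ[ℝ]) := by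
  have hstar : x ᵥ* Aᴴ ⬝ᵥ star x = star (x ᵥ* A ⬝ᵥ star x) := by
    rw [← star_dotProduct_star, star_star, star_vecMul, dotProduct_mulVec]
  rw [vecMul_smul, smul_dotProduct, vecMul_add, add_dotProduct, hstar, star_add_self', smul_coe,
    inv_mul_cancel_left₀ two_ne_zero]

theorem vecMul_conj_diagonal_dotProduct_star [DecidableEq ι] {W : Matrix ι ι ℍ[ℝ]}
    (hW : Wᴴ * W = 1) (a : ι → ℍ[ℝ]) (μ : ι → ℝ) :
    (a ᵥ* Wᴴ) ᵥ* (W * diagonal (fun k => (μ k : ℍ[ℝ])) * Wᴴ) ⬝ᵥ star (a ᵥ* Wᴴ)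
      = ((∑ k, μ k * normSq (a k) : ℝ) : ℍ[ℝ]) := by
  rw [vecMul_vecMul_dotProduct_star, conjTranspose_conjTranspose, ← Matrix.mul_assoc,
    ← Matrix.mul_assoc, hW, Matrix.one_mul, Matrix.mul_assoc, hW, Matrix.mul_one,
    vecMul_diagonal_dotProduct_star]

theorem sum_normSq_vecMul_svd [DecidableEq ι] {U V : Matrix ι ι ℍ[ℝ]} (hU : Uᴴ * U = 1)
    (hV : Vᴴ * V = 1) (b : ι → ℍ[ℝ]) (σ : ι → ℝ) :
    ∑ k, normSq (((b ᵥ* Uᴴ) ᵥ* (U * diagonal (fun k => (σ k : ℍ[ℝ])) * Vᴴ)) k)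
      = ∑ k, σ k ^ 2 * normSq (b k) := by
  rw [vecMul_vecMul, ← Matrix.mul_assoc, ← Matrix.mul_assoc, hU, Matrix.one_mul,
    ← vecMul_vecMul, sum_normSq_vecMul_conjTranspose _ hV]
  simp only [vecMul_diagonal, map_mul, normSq_coe, mul_comm]

end Quaternion

/-- For a square quaternion matrix `A` with singular values `σ` (from an SVD)
and `H = (A* + A)/2` with eigenvalues `μ` (from a unitary diagonalization),
one has `μ i ≤ σ i` for all `i`. -/
theorem quaternion_hermitian_part_eigenvalues_le_singular_values (m : ℕ)
    (A U V H W : Matrix (Fin m) (Fin m) ℍ[ℝ]) (σ μ : Fin m → ℝ)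
    (hU : Uᴴ * U = 1 ∧ U * Uᴴ = 1) (hV : Vᴴ * V = 1 ∧ V * Vᴴ = 1)
    (hσdec : ∀ i j : Fin m, i ≤ j → σ j ≤ σ i) (hσnn : ∀ i, 0 ≤ σ i)
    (hSVD : A = U * Matrix.diagonal (fun i => (σ i : ℍ[ℝ])) * Vᴴ)
    (hH : H = (2⁻¹ : ℝ) • (Aᴴ + A))
    (hW : Wᴴ * W = 1 ∧ W * Wᴴ = 1)
    (hμdec : ∀ i j : Fin m, i ≤ j → μ j ≤ μ i)
    (hHdiag : H = W * Matrix.diagonal (fun i => (μ i : ℍ[ℝ])) * Wᴴ) :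
    ∀ i, μ i ≤ σ i := by
  intro i
  obtain ⟨a, b, ha0, ha, hb, hab⟩ := exists_ne_zero_vecMul_eq_vecMul hW.1 hW.2 hU.1 hU.2
    (s := Finset.Iic i) (t := Finset.Ici i)
    (by simp only [Fin.card_Iic, Fin.card_Ici, Fintype.card_fin]; omega)
  set x := a ᵥ* Wᴴ
  have hxa : ∑ k, normSq (x k) = ∑ k, normSq (a k) := sum_normSq_vecMul_conjTranspose a hW.1
  have hxb : ∑ k, normSq (x k) = ∑ k, normSq (b k) := by
    rw [hab, sum_normSq_vecMul_conjTranspose b hU.1]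
  have hlow : μ i * ∑ k, normSq (x k) ≤ (x ᵥ* A ⬝ᵥ star x).re := by
    rw [← re_coe (x ᵥ* A ⬝ᵥ star x).re, ← vecMul_hermitianPart_dotProduct_star, ← hH, hHdiag,
      vecMul_conj_diagonal_dotProduct_star hW.1, re_coe, hxa]
    exact mul_sum_normSq_le_sum_mul_normSq fun k hk => hμdec k i (Finset.mem_Iic.mp (ha k hk))
  have hup : ∑ k, normSq ((x ᵥ* A) k) ≤ σ i ^ 2 * ∑ k, normSq (x k) := by
    rw [hxb, hab, hSVD, sum_normSq_vecMul_svd hU.1 hV.1]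
    exact sum_mul_normSq_le_mul_sum_normSq fun k hk =>
      pow_le_pow_left₀ (hσnn k) (hσdec i k (Finset.mem_Ici.mp (hb k hk))) 2
  exact le_of_mul_le_mul_right (hlow.trans (re_dotProduct_star_le_of_sum_normSq_le (hσnn i) hup))
    (hxa ▸ sum_normSq_pos ha0)
end

section
/- Let A, B ∈ ℍ^{m×m} be quaternion Hermitian matrices with eigenvalues λ₁(A) ≥ … ≥ λ_m(A) and λ₁(B) ≥ … ≥ λ_m(B). Then trace(AB + BA) ≤ 2 Σᵢ λᵢ(A)λᵢ(B). -/
open Quaternion Matrix Finset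

lemma aux_re_sum {α : Type*} (s : Finset α) (f : α → ℍ[ℝ]) :
    (∑ i ∈ s, f i).re = ∑ i ∈ s, (f i).re := by
  induction s using Finset.cons_induction with
  | empty => simp
  | cons a s ha ih => simp [Finset.sum_cons, ih]

lemma aux_re_trace_mul_comm {m : ℕ} (X Y : Matrix (Fin m) (Fin m) ℍ[ℝ]) :
    (Matrix.trace (X * Y)).re = (Matrix.trace (Y * X)).re := by
  simp only [Matrix.trace, Matrix.diag, Matrix.mul_apply, aux_re_sum]
  rw [Finset.sum_comm]
  simp only [Quaternion.re_mul]
  apply Finset.sum_congr rfl; intros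
  apply Finset.sum_congr rfl; intros
  ring

lemma aux_doubly (m : ℕ) (a b : Fin m → ℝ)
    (ha : ∀ i j : Fin m, i ≤ j → a j ≤ a i)
    (hb : ∀ i j : Fin m, i ≤ j → b j ≤ b i)
    (S : Matrix (Fin m) (Fin m) ℝ) (hS : S ∈ doublyStochastic ℝ (Fin m)) :
    ∑ k, ∑ l, a k * b l * S k l ≤ ∑ i, a i * b i := by
  obtain ⟨w, hw0, hw1, hwS⟩ := exists_eq_sum_perm_of_mem_doublyStochastic hS
  have hmono : Monovary a b := by
    intro i j hb_lt
    rcases le_total i j with h | h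
    · exact absurd (hb i j h) (not_le.2 hb_lt)
    · exact ha j i h
  have hperm : ∀ σ : Equiv.Perm (Fin m), ∑ k, a k * b (σ k) ≤ ∑ i, a i * b i :=
    fun σ => hmono.sum_mul_comp_perm_le_sum_mul
  have hSkl : ∀ k l, S k l = ∑ σ : Equiv.Perm (Fin m), w σ * (if l = σ k then 1 else 0) := by
    intro k l
    rw [← hwS]
    simp [Matrix.sum_apply, Equiv.Perm.permMatrix, PEquiv.toMatrix_apply,
      Equiv.toPEquiv_apply, eq_comm]
  calc ∑ k, ∑ l, a k * b l * S k l
      = ∑ k, ∑ σ : Equiv.Perm (Fin m), w σ * (a k * b (σ k)) := by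
        apply Finset.sum_congr rfl; intro k _
        simp only [hSkl, Finset.mul_sum]
        rw [Finset.sum_comm]
        apply Finset.sum_congr rfl; intro σ _
        simp only [mul_ite, mul_one, mul_zero]
        rw [Finset.sum_ite_eq' univ (σ k)]
        simp only [Finset.mem_univ, if_true]
        ring
    _ = ∑ σ : Equiv.Perm (Fin m), ∑ k, w σ * (a k * b (σ k)) := Finset.sum_comm
    _ = ∑ σ : Equiv.Perm (Fin m), w σ * ∑ k, a k * b (σ k) := by
        simp [Finset.mul_sum]
    _ ≤ ∑ σ : Equiv.Perm (Fin m), w σ * ∑ i, a i * b i :=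
        Finset.sum_le_sum fun σ _ => mul_le_mul_of_nonneg_left (hperm σ) (hw0 σ)
    _ = ∑ i, a i * b i := by rw [← Finset.sum_mul, hw1, one_mul]

/-- von Neumann type trace inequality for Hermitian quaternion matrices:
`trace(AB + BA) ≤ 2 ∑ᵢ λᵢ(A) λᵢ(B)`. -/
theorem quaternion_hermitian_trace_inequality (m : ℕ)
    (A B U V : Matrix (Fin m) (Fin m) ℍ[ℝ]) (lamA lamB : Fin m → ℝ)
    (hAh : A.IsHermitian) (hBh : B.IsHermitian)
    (hU : Uᴴ * U = 1 ∧ U * Uᴴ = 1) (hV : Vᴴ * V = 1 ∧ V * Vᴴ = 1)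
    (hlamA : ∀ i j : Fin m, i ≤ j → lamA j ≤ lamA i)
    (hlamB : ∀ i j : Fin m, i ≤ j → lamB j ≤ lamB i)
    (hAdiag : A = U * Matrix.diagonal (fun i => (lamA i : ℍ[ℝ])) * Uᴴ)
    (hBdiag : B = V * Matrix.diagonal (fun i => (lamB i : ℍ[ℝ])) * Vᴴ) :
    (Matrix.trace (A * B + B * A)).re ≤ 2 * ∑ i, lamA i * lamB i := by
  set W : Matrix (Fin m) (Fin m) ℍ[ℝ] := Uᴴ * V with hW
  set dA : Fin m → ℍ[ℝ] := fun i => (lamA i : ℍ[ℝ])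
  set dB : Fin m → ℍ[ℝ] := fun i => (lamB i : ℍ[ℝ])
  -- key trace identity
  have key : (Matrix.trace (A * B)).re
      = ∑ k, ∑ l, lamA k * lamB l * Quaternion.normSq (W k l) := by
    have e1 : A * B = U * (Matrix.diagonal dA * Uᴴ * (V * Matrix.diagonal dB * Vᴴ)) := by
      rw [hAdiag, hBdiag]; simp only [Matrix.mul_assoc]
    have e2 : Matrix.diagonal dA * Uᴴ * (V * Matrix.diagonal dB * Vᴴ) * U
        = Matrix.diagonal dA * (W * Matrix.diagonal dB * Wᴴ) := by
      rw [hW, Matrix.conjTranspose_mul, Matrix.conjTranspose_conjTranspose]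
      simp only [Matrix.mul_assoc]
    rw [e1, aux_re_trace_mul_comm, e2]
    have entry : ∀ k l : Fin m, W k l * dB l * star (W k l)
        = ((lamB l * Quaternion.normSq (W k l) : ℝ) : ℍ[ℝ]) := by
      intro k l
      rw [mul_assoc, Quaternion.coe_commutes, ← mul_assoc, Quaternion.self_mul_star,
        ← Quaternion.coe_mul, mul_comm]
    have hMkk : ∀ k : Fin m,
        ((Matrix.diagonal dA * (W * Matrix.diagonal dB * Wᴴ)) k k).re
        = ∑ l, lamA k * lamB l * Quaternion.normSq (W k l) := by
      intro k
      rw [Matrix.diagonal_mul, Matrix.mul_apply, Finset.mul_sum, aux_re_sum]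
      apply Finset.sum_congr rfl; intro l _
      rw [Matrix.mul_diagonal, Matrix.conjTranspose_apply, entry k l,
        ← Quaternion.coe_mul, Quaternion.re_coe]
      ring
    simp only [Matrix.trace, Matrix.diag, aux_re_sum]
    exact Finset.sum_congr rfl fun k _ => hMkk k
  -- doubly stochastic
  have hWWh : W * Wᴴ = 1 := by
    rw [hW, Matrix.conjTranspose_mul, Matrix.conjTranspose_conjTranspose]
    calc Uᴴ * V * (Vᴴ * U) = Uᴴ * (V * Vᴴ) * U := by simp only [Matrix.mul_assoc]
    _ = 1 := by rw [hV.2, Matrix.mul_one, hU.1]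
  have hWhW : Wᴴ * W = 1 := by
    rw [hW, Matrix.conjTranspose_mul, Matrix.conjTranspose_conjTranspose]
    calc Vᴴ * U * (Uᴴ * V) = Vᴴ * (U * Uᴴ) * V := by simp only [Matrix.mul_assoc]
    _ = 1 := by rw [hU.2, Matrix.mul_one, hV.1]
  set S : Matrix (Fin m) (Fin m) ℝ := Matrix.of (fun k l => Quaternion.normSq (W k l)) with hS
  have hSmem : S ∈ doublyStochastic ℝ (Fin m) := by
    rw [mem_doublyStochastic_iff_sum]
    refine ⟨fun i j => Quaternion.normSq_nonneg, fun i => ?_, fun j => ?_⟩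
    · have := congrArg (fun M : Matrix (Fin m) (Fin m) ℍ[ℝ] => (M i i).re) hWWh
      simpa [Matrix.mul_apply, Matrix.conjTranspose_apply, Quaternion.self_mul_star,
        aux_re_sum, Matrix.one_apply, hS] using this
    · have := congrArg (fun M : Matrix (Fin m) (Fin m) ℍ[ℝ] => (M j j).re) hWhW
      simpa [Matrix.mul_apply, Matrix.conjTranspose_apply, Quaternion.star_mul_self,
        aux_re_sum, Matrix.one_apply, hS] using this
  have main := aux_doubly m lamA lamB hlamA hlamB S hSmem
  have key2 : (Matrix.trace (B * A)).re = (Matrix.trace (A * B)).re :=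
    aux_re_trace_mul_comm B A
  have hSapp : ∀ k l, S k l = Quaternion.normSq (W k l) := fun k l => rfl
  rw [Matrix.trace_add, Quaternion.re_add, key2, key]
  simp only [hSapp] at main
  linarith
end

section
/- (Singular value Hoffman–Wielandt inequality for quaternion matrices) For A, B ∈ ℍ^{m×n} with singular values σ₁(A) ≥ … ≥ σ_s(A) and σ₁(B) ≥ … ≥ σ_s(B), s = min(m,n), one has Σᵢ (σᵢ(A) − σᵢ(B))² ≤ ‖A − B‖_F². -/
open Quaternion Matrix Finset

/-- The `m × n` rectangular diagonal quaternion matrix with diagonal entries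
given by `σ : Fin (min m n) → ℝ`. -/
noncomputable def rectDiag (m n : ℕ) (σ : Fin (min m n) → ℝ) : Matrix (Fin m) (Fin n) ℍ[ℝ] :=
  Matrix.of fun i j =>
    if h : (i : ℕ) = (j : ℕ) then ((σ ⟨i, lt_min i.isLt (h ▸ j.isLt)⟩ : ℝ) : ℍ[ℝ]) else 0



lemma q_re_sum {ι : Type*} (t : Finset ι) (f : ι → ℍ[ℝ]) :
    (∑ i ∈ t, f i).re = ∑ i ∈ t, (f i).re := by
  induction t using Finset.cons_induction with
  | empty => simp
  | cons a s ha ih => simp [Finset.sum_cons, ih]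

lemma q_re_mul_comm (a b : ℍ[ℝ]) : (a * b).re = (b * a).re := by
  simp only [Quaternion.re_mul]; ring

lemma q_re_le_norm (a : ℍ[ℝ]) : a.re ≤ ‖a‖ := by
  have h1 : Quaternion.normSq a = ‖a‖ * ‖a‖ := Quaternion.normSq_eq_norm_mul_self a
  rw [Quaternion.normSq_def'] at h1
  nlinarith [norm_nonneg a, sq_nonneg a.imI, sq_nonneg a.imJ, sq_nonneg a.imK]

lemma q_re_mul_le (a b : ℍ[ℝ]) : (a * b).re ≤ ‖a‖ * ‖b‖ :=
  (q_re_le_norm _).trans_eq (norm_mul a b)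

lemma q_star_mul_self_re (a : ℍ[ℝ]) : (star a * a).re = ‖a‖ ^ 2 := by
  rw [Quaternion.star_mul_self, Quaternion.re_coe, Quaternion.normSq_eq_norm_mul_self, sq]

lemma q_mul_star_self_re (a : ℍ[ℝ]) : (a * star a).re = ‖a‖ ^ 2 := by
  rw [Quaternion.self_mul_star, Quaternion.re_coe, Quaternion.normSq_eq_norm_mul_self, sq]

noncomputable def Retr {k : Type*} [Fintype k] (M : Matrix k k ℍ[ℝ]) : ℝ := ∑ i, (M i i).re

lemma Retr_mul_comm {k l : Type*} [Fintype k] [Fintype l]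
    (M : Matrix k l ℍ[ℝ]) (N : Matrix l k ℍ[ℝ]) : Retr (M * N) = Retr (N * M) := by
  simp only [Retr, Matrix.mul_apply, q_re_sum]
  rw [Finset.sum_comm]
  exact Finset.sum_congr rfl fun i _ => Finset.sum_congr rfl fun j _ => q_re_mul_comm _ _

lemma Retr_conjTranspose {k : Type*} [Fintype k] (M : Matrix k k ℍ[ℝ]) : Retr Mᴴ = Retr M := by
  simp [Retr, Matrix.conjTranspose_apply]

lemma Retr_fro {k l : Type*} [Fintype k] [Fintype l] (M : Matrix k l ℍ[ℝ]) :
    Retr (Mᴴ * M) = ∑ i, ∑ j, ‖M i j‖ ^ 2 := by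
  simp only [Retr, Matrix.mul_apply, Matrix.conjTranspose_apply, q_re_sum, q_star_mul_self_re]
  exact Finset.sum_comm

lemma Retr_add {k : Type*} [Fintype k] (M N : Matrix k k ℍ[ℝ]) :
    Retr (M + N) = Retr M + Retr N := by
  simp [Retr, Matrix.add_apply, Finset.sum_add_distrib]

lemma Retr_sub {k : Type*} [Fintype k] (M N : Matrix k k ℍ[ℝ]) :
    Retr (M - N) = Retr M - Retr N := by
  simp [Retr, Matrix.sub_apply, Finset.sum_sub_distrib]

lemma fro_sub {k l : Type*} [Fintype k] [Fintype l] (A B : Matrix k l ℍ[ℝ]) :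
    ∑ i, ∑ j, ‖(A - B) i j‖ ^ 2
      = (∑ i, ∑ j, ‖A i j‖ ^ 2) + (∑ i, ∑ j, ‖B i j‖ ^ 2) - 2 * Retr (Aᴴ * B) := by
  have h : (A - B)ᴴ * (A - B) = Aᴴ * A - Aᴴ * B - Bᴴ * A + Bᴴ * B := by
    rw [Matrix.conjTranspose_sub, Matrix.sub_mul, Matrix.mul_sub, Matrix.mul_sub]
    abel
  have hBA : Retr (Bᴴ * A) = Retr (Aᴴ * B) := by
    rw [← Retr_conjTranspose (Bᴴ * A), Matrix.conjTranspose_mul,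
      Matrix.conjTranspose_conjTranspose]
  rw [← Retr_fro, h, Retr_add, Retr_sub, Retr_sub, Retr_fro, Retr_fro, hBA]
  ring

def emL (m n : ℕ) (t : Fin (min m n)) : Fin m := ⟨t, lt_of_lt_of_le t.isLt (min_le_left m n)⟩
def enL (m n : ℕ) (t : Fin (min m n)) : Fin n := ⟨t, lt_of_lt_of_le t.isLt (min_le_right m n)⟩

lemma emL_injective (m n : ℕ) : Function.Injective (emL m n) := by
  intro a b h
  simp only [emL, Fin.mk.injEq] at h
  exact Fin.ext h

lemma enL_injective (m n : ℕ) : Function.Injective (enL m n) := by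
  intro a b h
  simp only [enL, Fin.mk.injEq] at h
  exact Fin.ext h

lemma rectDiag_apply_diag (m n : ℕ) (σ : Fin (min m n) → ℝ) (t : Fin (min m n)) :
    rectDiag m n σ (emL m n t) (enL m n t) = ((σ t : ℝ) : ℍ[ℝ]) := by
  simp [rectDiag, emL, enL]

lemma rectDiag_apply_ne (m n : ℕ) (σ : Fin (min m n) → ℝ) (i : Fin m) (j : Fin n)
    (h : (i : ℕ) ≠ (j : ℕ)) : rectDiag m n σ i j = 0 := by
  show dite _ _ _ = _
  rw [dif_neg h]

lemma sum_rect {α : Type*} [AddCommMonoid α] (m n : ℕ) (f : Fin m → Fin n → α)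
    (hf : ∀ (i : Fin m) (j : Fin n), (i : ℕ) ≠ (j : ℕ) → f i j = 0) :
    ∑ i, ∑ j, f i j = ∑ t : Fin (min m n), f (emL m n t) (enL m n t) := by
  classical
  rw [← Finset.sum_product']
  have hsub : ((Finset.univ : Finset (Fin (min m n))).image
      fun t => (emL m n t, enL m n t)) ⊆ (Finset.univ ×ˢ Finset.univ) := by
    intro p _; simp [Finset.mem_product]
  rw [← Finset.sum_subset hsub ?_]
  · rw [Finset.sum_image ?_]
    intro t _ u _ h
    exact emL_injective m n (Prod.ext_iff.1 h).1
  · intro p _ hp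
    by_contra hne
    apply hp
    have hne' : (p.1 : ℕ) = (p.2 : ℕ) := by
      by_contra hc
      exact hne (hf p.1 p.2 hc)
    refine Finset.mem_image.2 ⟨⟨(p.1 : ℕ), lt_min p.1.isLt (hne' ▸ p.2.isLt)⟩,
      Finset.mem_univ _, ?_⟩
    exact Prod.ext (Fin.ext rfl) (Fin.ext hne')

lemma q_coe_mul_re (r : ℝ) (a : ℍ[ℝ]) : ((r : ℍ[ℝ]) * a).re = r * a.re := by
  rw [Quaternion.coe_mul_eq_smul, Quaternion.re_smul, smul_eq_mul]

lemma q_mul_coe_mul_re (a : ℍ[ℝ]) (r : ℝ) (b : ℍ[ℝ]) :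
    (a * ((r : ℍ[ℝ]) * b)).re = r * (a * b).re := by
  rw [Quaternion.coe_mul_eq_smul, mul_smul_comm, Quaternion.re_smul, smul_eq_mul]

lemma Retr_quad (m n : ℕ) (σ τ : Fin (min m n) → ℝ)
    (P : Matrix (Fin m) (Fin m) ℍ[ℝ]) (Q : Matrix (Fin n) (Fin n) ℍ[ℝ]) :
    Retr ((rectDiag m n σ)ᴴ * (P * (rectDiag m n τ * Q)))
      = ∑ t, ∑ u, σ t * τ u *
          (P (emL m n t) (emL m n u) * Q (enL m n u) (enL m n t)).re := by
  classical
  set N : Matrix (Fin m) (Fin n) ℍ[ℝ] := P * (rectDiag m n τ * Q) with hN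
  have step1 : Retr ((rectDiag m n σ)ᴴ * N)
      = ∑ i : Fin m, ∑ j : Fin n, (star (rectDiag m n σ i j) * N i j).re := by
    simp only [Retr, Matrix.mul_apply, Matrix.conjTranspose_apply, q_re_sum]
    exact Finset.sum_comm
  rw [step1, sum_rect m n _ (fun i j h => by rw [rectDiag_apply_ne m n σ i j h]; simp)]
  refine Finset.sum_congr rfl fun t _ => ?_
  rw [rectDiag_apply_diag, Quaternion.star_coe]
  have hNt : (star ((σ t : ℝ) : ℍ[ℝ]) * N (emL m n t) (enL m n t)).re
      = σ t * (N (emL m n t) (enL m n t)).re := by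
    rw [Quaternion.star_coe, q_coe_mul_re]
  rw [Quaternion.star_coe] at hNt
  rw [hNt]
  have hNexp : (N (emL m n t) (enL m n t)).re
      = ∑ i' : Fin m, ∑ j' : Fin n,
          (P (emL m n t) i' * (rectDiag m n τ i' j' * Q j' (enL m n t))).re := by
    simp only [hN, Matrix.mul_apply, Finset.mul_sum, q_re_sum]
  rw [hNexp, sum_rect m n _ (fun i' j' h => by rw [rectDiag_apply_ne m n τ i' j' h]; simp)]
  rw [Finset.mul_sum]
  refine Finset.sum_congr rfl fun u _ => ?_
  rw [rectDiag_apply_diag, q_mul_coe_mul_re]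
  ring

lemma unitary_row_sum {k : Type*} [Fintype k] [DecidableEq k]
    (P : Matrix k k ℍ[ℝ]) (h : P * Pᴴ = 1) (i : k) : ∑ j, ‖P i j‖ ^ 2 = 1 := by
  have h' : (P * Pᴴ) i i = (1 : Matrix k k ℍ[ℝ]) i i := by rw [h]
  have := congrArg QuaternionAlgebra.re h'
  simp only [Matrix.mul_apply, Matrix.conjTranspose_apply, q_re_sum, q_mul_star_self_re,
    Matrix.one_apply_eq] at this
  exact this

lemma unitary_col_sum {k : Type*} [Fintype k] [DecidableEq k]
    (P : Matrix k k ℍ[ℝ]) (h : Pᴴ * P = 1) (j : k) : ∑ i, ‖P i j‖ ^ 2 = 1 := by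
  have h' : (Pᴴ * P) j j = (1 : Matrix k k ℍ[ℝ]) j j := by rw [h]
  have := congrArg QuaternionAlgebra.re h'
  simp only [Matrix.mul_apply, Matrix.conjTranspose_apply, q_re_sum, q_star_mul_self_re,
    Matrix.one_apply_eq] at this
  exact this

lemma sum_comp_injective_le {ι κ : Type*} [Fintype ι] [Fintype κ] [DecidableEq κ]
    (e : ι → κ) (he : Function.Injective e) (f : κ → ℝ) (hf : ∀ x, 0 ≤ f x) :
    ∑ i, f (e i) ≤ ∑ j, f j := by
  rw [← Finset.sum_image (fun a _ b _ h => he h)]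
  exact Finset.sum_le_sum_of_subset_of_nonneg (Finset.subset_univ _) fun x _ _ => hf x

lemma tele_sum (g : ℕ → ℝ) {t s : ℕ} (h : t ≤ s) :
    ∑ k ∈ Finset.Ico t s, (g k - g (k + 1)) = g t - g s := by
  induction s, h using Nat.le_induction with
  | base => simp
  | succ n hn ih => rw [Finset.sum_Ico_succ_top hn, ih]; ring

/-- extension of `a : Fin s → ℝ` by zero -/
def extz {s : ℕ} (a : Fin s → ℝ) : ℕ → ℝ := fun k => if h : k < s then a ⟨k, h⟩ else 0

/-- decrement sequence -/
def dfun {s : ℕ} (a : Fin s → ℝ) (k : ℕ) : ℝ := extz a k - extz a (k + 1)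

lemma dfun_nonneg {s : ℕ} (a : Fin s → ℝ)
    (ha : ∀ i j, i ≤ j → a j ≤ a i) (ha0 : ∀ i, 0 ≤ a i) (k : ℕ) : 0 ≤ dfun a k := by
  unfold dfun extz
  by_cases h1 : k + 1 < s
  · have h0 : k < s := Nat.lt_of_succ_lt h1
    rw [dif_pos h0, dif_pos h1]
    have := ha ⟨k, h0⟩ ⟨k + 1, h1⟩ (by simp [Fin.le_def])
    linarith
  · by_cases h0 : k < s
    · rw [dif_pos h0, dif_neg h1]
      simpa using ha0 ⟨k, h0⟩
    · rw [dif_neg h0, dif_neg h1]; simp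

lemma sum_dfun {s : ℕ} (a : Fin s → ℝ) (t : Fin s) :
    ∑ k : Fin s, (if t ≤ k then dfun a ↑k else 0) = a t := by
  classical
  have step1 : ∑ k : Fin s, (if t ≤ k then dfun a ↑k else 0)
      = ∑ k ∈ Finset.range s, (if (t : ℕ) ≤ k then dfun a k else 0) := by
    rw [← Fin.sum_univ_eq_sum_range (fun k' : ℕ => if (t : ℕ) ≤ k' then dfun a k' else 0) s]
    exact Finset.sum_congr rfl fun k _ => by simp only [Fin.le_def]
  have step2 : ∑ k ∈ Finset.range s, (if (t : ℕ) ≤ k then dfun a k else 0)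
      = ∑ k ∈ Finset.Ico (t : ℕ) s, dfun a k := by
    rw [← Finset.sum_filter]
    congr 1
    ext k
    simp only [Finset.mem_filter, Finset.mem_range, Finset.mem_Ico]
    exact and_comm
  rw [step1, step2]
  simp only [dfun]
  rw [tele_sum (extz a) (le_of_lt t.isLt)]
  unfold extz
  rw [dif_pos t.isLt, dif_neg (lt_irrefl s)]
  simp

lemma sum3_comm {ι : Type*} [Fintype ι] (F : ι → ι → ι → ℝ) :
    ∑ t, ∑ k, ∑ l, F t k l = ∑ k, ∑ l, ∑ t, F t k l := by
  calc ∑ t, ∑ k, ∑ l, F t k l = ∑ k, ∑ t, ∑ l, F t k l := Finset.sum_comm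
    _ = ∑ k, ∑ l, ∑ t, F t k l := Finset.sum_congr rfl fun k _ => Finset.sum_comm

lemma sum4_comm {ι : Type*} [Fintype ι] (F : ι → ι → ι → ι → ℝ) :
    ∑ t, ∑ u, ∑ k, ∑ l, F t u k l = ∑ k, ∑ l, ∑ t, ∑ u, F t u k l := by
  calc ∑ t, ∑ u, ∑ k, ∑ l, F t u k l
      = ∑ t, ∑ k, ∑ u, ∑ l, F t u k l := Finset.sum_congr rfl fun t _ => Finset.sum_comm
    _ = ∑ k, ∑ t, ∑ u, ∑ l, F t u k l := Finset.sum_comm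
    _ = ∑ k, ∑ t, ∑ l, ∑ u, F t u k l :=
        Finset.sum_congr rfl fun k _ => Finset.sum_congr rfl fun t _ => Finset.sum_comm
    _ = ∑ k, ∑ l, ∑ t, ∑ u, F t u k l := Finset.sum_congr rfl fun k _ => Finset.sum_comm

lemma substoch {s : ℕ} (C : Fin s → Fin s → ℝ) (a b : Fin s → ℝ)
    (hC0 : ∀ t u, 0 ≤ C t u) (hrow : ∀ t, ∑ u, C t u ≤ 1) (hcol : ∀ u, ∑ t, C t u ≤ 1)
    (ha : ∀ i j, i ≤ j → a j ≤ a i) (ha0 : ∀ i, 0 ≤ a i)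
    (hb : ∀ i j, i ≤ j → b j ≤ b i) (hb0 : ∀ i, 0 ≤ b i) :
    ∑ t, ∑ u, a t * b u * C t u ≤ ∑ t, a t * b t := by
  classical
  set S : Fin s → Fin s → ℝ := fun k l => ∑ t : Fin s, ∑ u : Fin s,
    (if t ≤ k then (1 : ℝ) else 0) * (if u ≤ l then (1 : ℝ) else 0) * C t u with hS
  set Nf : Fin s → Fin s → ℝ := fun k l => ∑ t : Fin s,
    (if t ≤ k ∧ t ≤ l then (1 : ℝ) else 0) with hNf
  have hSN : ∀ k l : Fin s, S k l ≤ Nf k l := by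
    intro k l
    rcases le_total k l with hkl | hlk
    · refine Finset.sum_le_sum fun t _ => ?_
      by_cases h : t ≤ k
      · have h2 : (if t ≤ k ∧ t ≤ l then (1 : ℝ) else 0) = 1 := by
          rw [if_pos ⟨h, h.trans hkl⟩]
        rw [h2]
        calc ∑ u : Fin s, (if t ≤ k then (1:ℝ) else 0) * (if u ≤ l then (1:ℝ) else 0) * C t u
            ≤ ∑ u : Fin s, C t u := by
              refine Finset.sum_le_sum fun u _ => ?_
              by_cases hu : u ≤ l <;> simp [h, hu, hC0 t u]
          _ ≤ 1 := hrow t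
      · simp [h]
    · have hswap : S k l = ∑ u : Fin s, ∑ t : Fin s,
          (if t ≤ k then (1:ℝ) else 0) * (if u ≤ l then (1:ℝ) else 0) * C t u := by
        rw [hS]; exact Finset.sum_comm
      have hNf' : Nf k l = ∑ u : Fin s, (if u ≤ k ∧ u ≤ l then (1:ℝ) else 0) := rfl
      rw [hswap, hNf']
      refine Finset.sum_le_sum fun u _ => ?_
      by_cases h : u ≤ l
      · have h2 : (if u ≤ k ∧ u ≤ l then (1 : ℝ) else 0) = 1 := by
          rw [if_pos ⟨h.trans hlk, h⟩]
        rw [h2]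
        calc ∑ t : Fin s, (if t ≤ k then (1:ℝ) else 0) * (if u ≤ l then (1:ℝ) else 0) * C t u
            ≤ ∑ t : Fin s, C t u := by
              refine Finset.sum_le_sum fun t _ => ?_
              by_cases ht : t ≤ k <;> simp [h, ht, hC0 t u]
          _ ≤ 1 := hcol u
      · simp [h]
  have claim1 : ∑ t : Fin s, ∑ u : Fin s, a t * b u * C t u
      = ∑ k : Fin s, ∑ l : Fin s, dfun a ↑k * dfun b ↑l * S k l := by
    calc ∑ t : Fin s, ∑ u : Fin s, a t * b u * C t u
        = ∑ t : Fin s, ∑ u : Fin s, ∑ k : Fin s, ∑ l : Fin s,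
            (if t ≤ k then dfun a ↑k else 0) * (if u ≤ l then dfun b ↑l else 0) * C t u := by
          refine Finset.sum_congr rfl fun t _ => Finset.sum_congr rfl fun u _ => ?_
          rw [← sum_dfun a t, ← sum_dfun b u, Finset.sum_mul_sum, Finset.sum_mul]
          exact Finset.sum_congr rfl fun k _ => Finset.sum_mul _ _ _
      _ = ∑ k : Fin s, ∑ l : Fin s, ∑ t : Fin s, ∑ u : Fin s,
            (if t ≤ k then dfun a ↑k else 0) * (if u ≤ l then dfun b ↑l else 0) * C t u :=
          sum4_comm _
      _ = ∑ k : Fin s, ∑ l : Fin s, dfun a ↑k * dfun b ↑l * S k l := by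
          refine Finset.sum_congr rfl fun k _ => Finset.sum_congr rfl fun l _ => ?_
          have hterm : ∀ t u : Fin s, (if t ≤ k then dfun a ↑k else 0)
              * (if u ≤ l then dfun b ↑l else 0) * C t u
              = dfun a ↑k * dfun b ↑l
                * ((if t ≤ k then (1:ℝ) else 0) * (if u ≤ l then (1:ℝ) else 0) * C t u) := by
            intro t u; split_ifs <;> ring
          simp only [hterm, hS, ← Finset.mul_sum]
  have claim2 : ∑ t : Fin s, a t * b t
      = ∑ k : Fin s, ∑ l : Fin s, dfun a ↑k * dfun b ↑l * Nf k l := by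
    calc ∑ t : Fin s, a t * b t
        = ∑ t : Fin s, ∑ k : Fin s, ∑ l : Fin s,
            (if t ≤ k then dfun a ↑k else 0) * (if t ≤ l then dfun b ↑l else 0) := by
          refine Finset.sum_congr rfl fun t _ => ?_
          rw [← sum_dfun a t, ← sum_dfun b t, Finset.sum_mul_sum]
      _ = ∑ k : Fin s, ∑ l : Fin s, ∑ t : Fin s,
            (if t ≤ k then dfun a ↑k else 0) * (if t ≤ l then dfun b ↑l else 0) :=
          sum3_comm _
      _ = ∑ k : Fin s, ∑ l : Fin s, dfun a ↑k * dfun b ↑l * Nf k l := by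
          refine Finset.sum_congr rfl fun k _ => Finset.sum_congr rfl fun l _ => ?_
          have hterm : ∀ t : Fin s, (if t ≤ k then dfun a ↑k else 0)
              * (if t ≤ l then dfun b ↑l else 0)
              = dfun a ↑k * dfun b ↑l * (if t ≤ k ∧ t ≤ l then (1:ℝ) else 0) := by
            intro t
            by_cases h1 : t ≤ k <;> by_cases h2 : t ≤ l <;> simp [h1, h2]
          simp only [hterm, hNf, ← Finset.mul_sum]
  rw [claim1, claim2]
  refine Finset.sum_le_sum fun k _ => Finset.sum_le_sum fun l _ => ?_
  exact mul_le_mul_of_nonneg_left (hSN k l)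
    (mul_nonneg (dfun_nonneg a ha ha0 _) (dfun_nonneg b hb hb0 _))


lemma Retr_quad' (m n : ℕ) (σ τ : Fin (min m n) → ℝ) :
    Retr ((rectDiag m n σ)ᴴ * rectDiag m n τ) = ∑ t, σ t * τ t := by
  classical
  have h : (rectDiag m n σ)ᴴ * rectDiag m n τ
      = (rectDiag m n σ)ᴴ * ((1 : Matrix (Fin m) (Fin m) ℍ[ℝ])
        * (rectDiag m n τ * (1 : Matrix (Fin n) (Fin n) ℍ[ℝ]))) := by
    rw [Matrix.mul_one, Matrix.one_mul]
  rw [h, Retr_quad]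
  have hone : ∀ t u : Fin (min m n),
      (((1 : Matrix (Fin m) (Fin m) ℍ[ℝ]) (emL m n t) (emL m n u))
        * ((1 : Matrix (Fin n) (Fin n) ℍ[ℝ]) (enL m n u) (enL m n t))).re
      = if u = t then 1 else 0 := by
    intro t u
    by_cases h : u = t
    · subst h; simp [Matrix.one_apply_eq]
    · have h1 : emL m n t ≠ emL m n u := fun hc => h (emL_injective m n hc).symm
      rw [Matrix.one_apply_ne h1]
      rw [if_neg h]
      simp
  simp only [hone]
  refine Finset.sum_congr rfl fun t _ => ?_
  rw [Finset.sum_eq_single t (fun u _ hu => by rw [if_neg hu, mul_zero])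
    (fun h => absurd (Finset.mem_univ t) h)]
  rw [if_pos rfl, mul_one]

/-- Singular value Hoffman–Wielandt inequality for quaternion matrices:
`∑ᵢ (σᵢ(A) − σᵢ(B))² ≤ ‖A − B‖_F²`. -/
theorem quaternion_singular_value_hoffman_wielandt (m n : ℕ)
    (A B : Matrix (Fin m) (Fin n) ℍ[ℝ])
    (U X : Matrix (Fin m) (Fin m) ℍ[ℝ]) (V Y : Matrix (Fin n) (Fin n) ℍ[ℝ])
    (σA σB : Fin (min m n) → ℝ)
    (hU : Uᴴ * U = 1 ∧ U * Uᴴ = 1) (hV : Vᴴ * V = 1 ∧ V * Vᴴ = 1)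
    (hX : Xᴴ * X = 1 ∧ X * Xᴴ = 1) (hY : Yᴴ * Y = 1 ∧ Y * Yᴴ = 1)
    (hσA : ∀ i j, i ≤ j → σA j ≤ σA i) (hσAnn : ∀ i, 0 ≤ σA i)
    (hσB : ∀ i j, i ≤ j → σB j ≤ σB i) (hσBnn : ∀ i, 0 ≤ σB i)
    (hA : A = U * rectDiag m n σA * Vᴴ)
    (hB : B = X * rectDiag m n σB * Yᴴ) :
    ∑ i, (σA i - σB i) ^ 2 ≤ ∑ i, ∑ j, ‖(A - B) i j‖ ^ 2 := by
  classical
  obtain ⟨hU1, hU2⟩ := hU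
  obtain ⟨hV1, hV2⟩ := hV
  obtain ⟨hX1, hX2⟩ := hX
  obtain ⟨hY1, hY2⟩ := hY
  set P : Matrix (Fin m) (Fin m) ℍ[ℝ] := Uᴴ * X with hP
  set Q : Matrix (Fin n) (Fin n) ℍ[ℝ] := Yᴴ * V with hQ
  have hPP : P * Pᴴ = 1 := by
    rw [hP, Matrix.conjTranspose_mul, Matrix.conjTranspose_conjTranspose,
      Matrix.mul_assoc, ← Matrix.mul_assoc X, hX2, Matrix.one_mul, hU1]
  have hPu : Pᴴ * P = 1 := by
    rw [hP, Matrix.conjTranspose_mul, Matrix.conjTranspose_conjTranspose,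
      Matrix.mul_assoc, ← Matrix.mul_assoc U, hU2, Matrix.one_mul, hX1]
  have hQQ : Q * Qᴴ = 1 := by
    rw [hQ, Matrix.conjTranspose_mul, Matrix.conjTranspose_conjTranspose,
      Matrix.mul_assoc, ← Matrix.mul_assoc V, hV2, Matrix.one_mul, hY1]
  have hQu : Qᴴ * Q = 1 := by
    rw [hQ, Matrix.conjTranspose_mul, Matrix.conjTranspose_conjTranspose,
      Matrix.mul_assoc, ← Matrix.mul_assoc Y, hY2, Matrix.one_mul, hV1]
  have hAA : Retr (Aᴴ * A) = Retr ((rectDiag m n σA)ᴴ * rectDiag m n σA) := by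
    rw [hA]
    simp only [Matrix.conjTranspose_mul, Matrix.conjTranspose_conjTranspose, Matrix.mul_assoc]
    rw [← Matrix.mul_assoc Uᴴ U, hU1, Matrix.one_mul, Retr_mul_comm]
    simp only [Matrix.mul_assoc]
    rw [hV1, Matrix.mul_one]
  have hBB : Retr (Bᴴ * B) = Retr ((rectDiag m n σB)ᴴ * rectDiag m n σB) := by
    rw [hB]
    simp only [Matrix.conjTranspose_mul, Matrix.conjTranspose_conjTranspose, Matrix.mul_assoc]
    rw [← Matrix.mul_assoc Xᴴ X, hX1, Matrix.one_mul, Retr_mul_comm]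
    simp only [Matrix.mul_assoc]
    rw [hY1, Matrix.mul_one]
  have froA : ∑ i, ∑ j, ‖A i j‖ ^ 2 = ∑ t, σA t ^ 2 := by
    rw [← Retr_fro, hAA, Retr_quad']
    exact Finset.sum_congr rfl fun t _ => (sq (σA t)).symm
  have froB : ∑ i, ∑ j, ‖B i j‖ ^ 2 = ∑ t, σB t ^ 2 := by
    rw [← Retr_fro, hBB, Retr_quad']
    exact Finset.sum_congr rfl fun t _ => (sq (σB t)).symm
  have htr : Retr (Aᴴ * B) = ∑ t, ∑ u, σA t * σB u
      * (P (emL m n t) (emL m n u) * Q (enL m n u) (enL m n t)).re := by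
    rw [hA, hB]
    simp only [Matrix.conjTranspose_mul, Matrix.conjTranspose_conjTranspose, Matrix.mul_assoc]
    rw [Retr_mul_comm]
    simp only [Matrix.mul_assoc]
    rw [show Uᴴ * (X * (rectDiag m n σB * (Yᴴ * V))) = P * (rectDiag m n σB * Q) from by
      rw [hP, hQ, Matrix.mul_assoc]]
    rw [Retr_quad]
  set Cm : Fin (min m n) → Fin (min m n) → ℝ := fun t u =>
    (‖P (emL m n t) (emL m n u)‖ ^ 2 + ‖Q (enL m n u) (enL m n t)‖ ^ 2) / 2 with hCm
  have hC0 : ∀ t u, 0 ≤ Cm t u := fun t u => by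
    rw [hCm]; positivity
  have hrow : ∀ t, ∑ u, Cm t u ≤ 1 := by
    intro t
    have h1 : ∑ u, ‖P (emL m n t) (emL m n u)‖ ^ 2 ≤ 1 := by
      calc ∑ u : Fin (min m n), ‖P (emL m n t) (emL m n u)‖ ^ 2
          ≤ ∑ j : Fin m, ‖P (emL m n t) j‖ ^ 2 :=
            sum_comp_injective_le (emL m n) (emL_injective m n)
              (fun j : Fin m => ‖P (emL m n t) j‖ ^ 2) (fun _ => sq_nonneg _)
        _ = 1 := unitary_row_sum P hPP (emL m n t)
    have h2 : ∑ u, ‖Q (enL m n u) (enL m n t)‖ ^ 2 ≤ 1 := by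
      calc ∑ u : Fin (min m n), ‖Q (enL m n u) (enL m n t)‖ ^ 2
          ≤ ∑ i : Fin n, ‖Q i (enL m n t)‖ ^ 2 :=
            sum_comp_injective_le (enL m n) (enL_injective m n)
              (fun i : Fin n => ‖Q i (enL m n t)‖ ^ 2) (fun _ => sq_nonneg _)
        _ = 1 := unitary_col_sum Q hQu (enL m n t)
    have hsplit : ∑ u, Cm t u = ((∑ u, ‖P (emL m n t) (emL m n u)‖ ^ 2)
        + (∑ u, ‖Q (enL m n u) (enL m n t)‖ ^ 2)) / 2 := by
      rw [hCm, ← Finset.sum_add_distrib, ← Finset.sum_div]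
    rw [hsplit]
    linarith
  have hcol : ∀ u, ∑ t, Cm t u ≤ 1 := by
    intro u
    have h1 : ∑ t, ‖P (emL m n t) (emL m n u)‖ ^ 2 ≤ 1 := by
      calc ∑ t : Fin (min m n), ‖P (emL m n t) (emL m n u)‖ ^ 2
          ≤ ∑ i : Fin m, ‖P i (emL m n u)‖ ^ 2 :=
            sum_comp_injective_le (emL m n) (emL_injective m n)
              (fun i : Fin m => ‖P i (emL m n u)‖ ^ 2) (fun _ => sq_nonneg _)
        _ = 1 := unitary_col_sum P hPu (emL m n u)
    have h2 : ∑ t, ‖Q (enL m n u) (enL m n t)‖ ^ 2 ≤ 1 := by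
      calc ∑ t : Fin (min m n), ‖Q (enL m n u) (enL m n t)‖ ^ 2
          ≤ ∑ j : Fin n, ‖Q (enL m n u) j‖ ^ 2 :=
            sum_comp_injective_le (enL m n) (enL_injective m n)
              (fun j : Fin n => ‖Q (enL m n u) j‖ ^ 2) (fun _ => sq_nonneg _)
        _ = 1 := unitary_row_sum Q hQQ (enL m n u)
    have hsplit : ∑ t, Cm t u = ((∑ t, ‖P (emL m n t) (emL m n u)‖ ^ 2)
        + (∑ t, ‖Q (enL m n u) (enL m n t)‖ ^ 2)) / 2 := by
      rw [hCm, ← Finset.sum_add_distrib, ← Finset.sum_div]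
    rw [hsplit]
    linarith
  have hbound : Retr (Aᴴ * B) ≤ ∑ t, σA t * σB t := by
    rw [htr]
    calc ∑ t, ∑ u, σA t * σB u
          * (P (emL m n t) (emL m n u) * Q (enL m n u) (enL m n t)).re
        ≤ ∑ t, ∑ u, σA t * σB u * Cm t u := by
          refine Finset.sum_le_sum fun t _ => Finset.sum_le_sum fun u _ => ?_
          refine mul_le_mul_of_nonneg_left ?_ (mul_nonneg (hσAnn t) (hσBnn u))
          have h1 := q_re_mul_le (P (emL m n t) (emL m n u)) (Q (enL m n u) (enL m n t))
          have h2 := sq_nonneg (‖P (emL m n t) (emL m n u)‖ - ‖Q (enL m n u) (enL m n t)‖)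
          rw [hCm]
          nlinarith
      _ ≤ ∑ t, σA t * σB t := substoch Cm σA σB hC0 hrow hcol hσA hσAnn hσB hσBnn
  rw [fro_sub A B, froA, froB]
  have expand : ∑ i, (σA i - σB i) ^ 2
      = ∑ t, σA t ^ 2 - 2 * ∑ t, σA t * σB t + ∑ t, σB t ^ 2 := by
    have h : ∀ t : Fin (min m n), (σA t - σB t) ^ 2
        = σA t ^ 2 - 2 * (σA t * σB t) + σB t ^ 2 := fun t => by ring
    simp only [h, Finset.sum_add_distrib, Finset.sum_sub_distrib, ← Finset.mul_sum]
  rw [expand]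
  linarith
end
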